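/- Let μ ∈ 𝔐_x(M), ν ∈ 𝔐_y(M) be global Keisler measures and D ∈ L_y(A) an A-definable set with 0 < ν(D) < 1. Suppose μ ≥_{E,A} ν and that some separated amalgam λ ∈ 𝔐_xy(A) witnesses the domination. Then μ ≥_{E,A} ν_[D], where ν_[D] is the localization of ν at D. -/

import Mathlib

open FirstOrder

/-!
*Amalgamation*: if `π_x(λ) = μ|_A` then `E(λ, μ)` is nonempty. By the Riesz extension theorem it
suffices that `Σ aᵢ λ(Sᵢ) + Σ bⱼ μ(Xⱼ) ≥ 0` (with `Sᵢ` `A`-definable and `Xⱼ` global) whenever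
`Σ aᵢ 1_{Sᵢ} + Σ bⱼ 1_{Xⱼ × M^y} ≥ 0` pointwise. For each threshold `r`, the set of `x` with
`r ≤ -Σ bⱼ 1_{Xⱼ}(x)` lies in the `A`-definable set `W` of those `x` whose whole fibre satisfies
`r ≤ Σ aᵢ 1_{Sᵢ}`, so its `μ`-measure is at most `μ(W) = λ(W × M^y) ≤ λ{r ≤ Σ aᵢ 1_{Sᵢ}}`;
integrating over `r` (layer cake) gives the inequality.

*Localization*: `d = λ(M^x × D)` equals `ν(D)` because `E(λ, μ)` is nonempty. Let `λ_D`, `λ_{¬D}`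
be the localizations of `λ` at `M^x × D` and at its complement; separatedness gives both the
`x`-marginal `μ|_A`, and `λ_D` is the new witness. Given `ω ∈ E(λ_D, μ)`, pick
`σ ∈ E(λ_{¬D}, μ)`; then `d ω + (1 - d) σ ∈ E(λ, μ)` has `y`-marginal `ν`, and evaluating at
`M^x × (D ∩ Y)` yields `d · ω(M^x × Y) = ν(D ∩ Y)`.
-/

/-- A Keisler measure over the parameter set `A`, in the variables indexed by `α`:
a finitely additive probability measure on the Boolean algebra of `A`-definable
subsets of `M^α` (i.e. on `L_α(A)`).  The function `toFun` is defined on all sets,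
but only its values on `A`-definable sets are constrained (and relevant). -/
structure KeislerMeasure (L : FirstOrder.Language) (M : Type*) [L.Structure M]
    (A : Set M) (α : Type*) where
  toFun : Set (α → M) → ℝ
  measure_univ : toFun Set.univ = 1
  nonneg' : ∀ s : Set (α → M), A.Definable L s → 0 ≤ toFun s
  compl' : ∀ s : Set (α → M), A.Definable L s → toFun sᶜ = 1 - toFun s
  union_inter' : ∀ s t : Set (α → M), A.Definable L s → A.Definable L t →
    toFun (s ∪ t) = toFun s + toFun t - toFun (s ∩ t)

/-- Pull back a set of variable assignments along a variable reindexing map: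
for `S ⊆ M^α` and `f : α → β`, `cyl f S ⊆ M^β` is the corresponding cylinder.
E.g. `cyl Sum.inl X = X × M^β` inside `M^(α ⊕ β)`. -/
def cyl {M : Type*} {α β : Type*} (f : α → β) (S : Set (α → M)) : Set (β → M) :=
  {g : β → M | (fun a => g (f a)) ∈ S}

/-- The product `X × Y` of a set in variables `α` and a set in variables `β`,
viewed inside the variables `α ⊕ β`. -/
def prodSet {M : Type*} {α β : Type*} (X : Set (α → M)) (Y : Set (β → M)) :
    Set (α ⊕ β → M) :=
  cyl Sum.inl X ∩ cyl Sum.inr Y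

/-- The extension space `E(λ, μ)`: all global Keisler measures `ω` in the
variables `α ⊕ β` whose restriction to `A`-definable sets is `λ` and whose
marginal `π_α(ω)` is `μ`. -/
def extSpace (L : FirstOrder.Language) {M : Type*} [L.Structure M] (A : Set M)
    {α β : Type*} (lam : KeislerMeasure L M A (α ⊕ β))
    (mu : KeislerMeasure L M (Set.univ : Set M) α) :
    Set (KeislerMeasure L M (Set.univ : Set M) (α ⊕ β)) :=
  {om | (∀ s : Set (α ⊕ β → M), A.Definable L s → om.toFun s = lam.toFun s) ∧
    (∀ X : Set (α → M), (Set.univ : Set M).Definable L X →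
      om.toFun (cyl Sum.inl X) = mu.toFun X)}

/-- `μ` extension dominates `ν` over `A` (written `μ ≥_{E,A} ν`): there is
`λ ∈ 𝔐_{αβ}(A)` with `π_α(λ) = μ|_A` such that `π_β(ω) = ν` for every
`ω ∈ E(λ, μ)`. -/
def ExtDomOver (L : FirstOrder.Language) {M : Type*} [L.Structure M] (A : Set M)
    {α β : Type*} (mu : KeislerMeasure L M (Set.univ : Set M) α)
    (nu : KeislerMeasure L M (Set.univ : Set M) β) : Prop :=
  ∃ lam : KeislerMeasure L M A (α ⊕ β),
    (∀ X : Set (α → M), A.Definable L X →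
      lam.toFun (cyl Sum.inl X) = mu.toFun X) ∧
    ∀ om ∈ extSpace L A lam mu, ∀ Y : Set (β → M),
      (Set.univ : Set M).Definable L Y → om.toFun (cyl Sum.inr Y) = nu.toFun Y

noncomputable def indicatorSum {X : Type*} : (Set X →₀ ℝ) →ₗ[ℝ] X → ℝ :=
  Finsupp.linearCombination ℝ fun S => S.indicator 1

open scoped Classical in
/-- Two points lie in the same atom of the Boolean algebra generated by `𝒮` iff they have the
same cell. -/
noncomputable def cell {X : Type*} (𝒮 : Finset (Set X)) (x : X) : Finset (Set X) :=
  𝒮.filter (x ∈ ·)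

section SimpleFunctions

variable {X : Type*}

theorem indicatorSum_apply (p : Set X →₀ ℝ) (x : X) :
    indicatorSum p x = ∑ S ∈ cell p.support x, p S := by
  classical
  simp only [indicatorSum, cell, Finsupp.linearCombination_apply, Finsupp.sum,
    Finset.sum_apply, Pi.smul_apply, Set.indicator_apply, Pi.one_apply, smul_eq_mul,
    mul_ite, mul_one, mul_zero, Finset.sum_ite, Finset.sum_const_zero, add_zero]

theorem abs_indicatorSum_le (p : Set X →₀ ℝ) (x : X) :
    |indicatorSum p x| ≤ p.sum fun _ a => |a| := by
  classical
  rw [indicatorSum_apply]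
  exact (Finset.abs_sum_le_sum_abs _ _).trans <| Finset.sum_le_sum_of_subset_of_nonneg
    (Finset.filter_subset _ _) fun _ _ _ => abs_nonneg _

theorem cell_mem_powerset (𝒮 : Finset (Set X)) (x : X) : cell 𝒮 x ∈ 𝒮.powerset := by
  classical
  exact Finset.mem_powerset.mpr (Finset.filter_subset _ _)

theorem indicatorSum_single_one (S : Set X) :
    indicatorSum (Finsupp.single S 1) = S.indicator 1 := by
  rw [indicatorSum, Finsupp.linearCombination_single, one_smul]

end SimpleFunctions

theorem mul_eq_add_integral_indicator {a b c w : ℝ} (h : w ≠ 0 → c ∈ Set.Icc a b) :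
    c * w = a * w + ∫ r in a..b, {r | r ≤ c}.indicator (fun _ => w) r := by
  by_cases hw : w = 0
  · simp [hw]
  · rw [intervalIntegral.integral_indicator (h hw), intervalIntegral.integral_const,
      smul_eq_mul]
    ring

theorem exists_linearMap_le_of_nonneg {X E F : Type*} [AddCommGroup E] [Module ℝ E]
    [AddCommGroup F] [Module ℝ F] (Ψ : E →ₗ[ℝ] X → ℝ) (Φ : F →ₗ[ℝ] X → ℝ) (V : F →ₗ[ℝ] ℝ)
    (C : Submodule ℝ F) (hV : ∀ c ∈ C, 0 ≤ Φ c → 0 ≤ V c) (hΦ : ∀ e, ∃ c ∈ C, Ψ e ≤ Φ c) :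
    ∃ G : E →ₗ[ℝ] ℝ, ∀ e, ∀ c ∈ C, Ψ e ≤ Φ c → G e ≤ V c := by
  let s : PointedCone ℝ (E × F) :=
    { carrier := {w | w.2 ∈ C ∧ Ψ w.1 ≤ Φ w.2}
      zero_mem' := by simp
      add_mem' := fun {v w} ⟨hv, hv'⟩ ⟨hw, hw'⟩ => by
        refine ⟨C.add_mem hv hw, ?_⟩
        change Ψ (v.1 + w.1) ≤ Φ (v.2 + w.2)
        rw [map_add, map_add]
        exact add_le_add hv' hw'
      smul_mem' := fun ⟨t, ht⟩ w ⟨hw, hw'⟩ => by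
        refine ⟨C.smul_mem t hw, ?_⟩
        change Ψ (t • w.1) ≤ Φ (t • w.2)
        rw [map_smul, map_smul]
        exact smul_le_smul_of_nonneg_left hw' ht }
  let f : E × F →ₗ.[ℝ] ℝ :=
    ⟨LinearMap.ker (LinearMap.fst ℝ E F), V ∘ₗ LinearMap.snd ℝ E F ∘ₗ Submodule.subtype _⟩
  -- Extend `(0, c) ↦ V c` to `g ≥ 0` on the cone `s`; then `G e := -g (e, 0)` works.
  obtain ⟨g, hgf, hgs⟩ := riesz_extension s f
    (fun ⟨w, hw⟩ ⟨hwC, hws⟩ => by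
      rw [show w.1 = 0 from hw, map_zero] at hws
      exact hV w.2 hwC hws)
    (fun ⟨e, c'⟩ => by
      obtain ⟨c, hc, hec⟩ := hΦ e
      refine ⟨⟨(0, c - c'), LinearMap.mem_ker.mpr rfl⟩, ?_, ?_⟩
      · simpa using hc
      · show Ψ (0 + e) ≤ Φ (c - c' + c')
        rwa [zero_add, sub_add_cancel])
  refine ⟨-(g ∘ₗ LinearMap.inl ℝ E F), fun e c hc hec => ?_⟩
  have hsplit : g (e, c) = g (e, 0) + g (0, c) := by
    rw [← map_add, Prod.mk_add_mk, add_zero, zero_add]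
  have h0c : g (0, c) = V c := hgf ⟨(0, c), LinearMap.mem_ker.mpr rfl⟩
  have := hgs (e, c) ⟨hc, hec⟩
  simp only [LinearMap.neg_apply, LinearMap.coe_comp, Function.comp_apply, LinearMap.inl_apply]
  linarith

theorem LinearMap.eq_of_indicatorSum_eq {X : Type*} {G : (Set X →₀ ℝ) →ₗ[ℝ] ℝ}
    (hG : ∀ e, 0 ≤ indicatorSum e → 0 ≤ G e)
    {e e' : Set X →₀ ℝ} (h : indicatorSum e = indicatorSum e') : G e = G e' := by
  have h₁ := hG (e - e') (by rw [map_sub, h, sub_self])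
  have h₂ := hG (e' - e) (by rw [map_sub, h, sub_self])
  rw [map_sub] at h₁ h₂
  linarith

section

variable {L : FirstOrder.Language} {M : Type*} [L.Structure M]

theorem Set.Definable.cyl {A : Set M} {α β : Type*} (f : α → β) {S : Set (α → M)}
    (h : A.Definable L S) : A.Definable L (cyl f S) :=
  h.preimage_comp f

theorem Set.Definable.image_comp_sumInl {A : Set M} {α β : Type*} {s : Set (α ⊕ β → M)}
    (h : A.Definable L s) :
    A.Definable L ((fun g : α ⊕ β → M => g ∘ Sum.inl) '' s) := by
  classical
  rcases s.eq_empty_or_nonempty with rfl | ⟨g₀, -⟩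
  · rw [Set.image_empty]
    exact Set.definable_empty
  obtain ⟨φ, rfl⟩ := h
  -- Only the finitely many `Sum.inr b` free in `φ` need to be quantified; `g₀` fills in the rest.
  let Fβ := {b : β // Sum.inr b ∈ φ.freeVarFinset}
  have : Finite Fβ := Finite.of_injective (fun b : Fβ => (⟨_, b.2⟩ : φ.freeVarFinset))
    fun _ _ h => Subtype.ext (Sum.inr_injective (congrArg Subtype.val h))
  let f : φ.freeVarFinset → α ⊕ Fβ := fun v => match v with
    | ⟨Sum.inl a, _⟩ => Sum.inl a
    | ⟨Sum.inr b, hb⟩ => Sum.inr ⟨b, hb⟩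
  let ψ : L[[A]].Formula (α ⊕ Fβ) := φ.restrictFreeVar f
  have hψ : ∀ (x : α → M) (u : Fβ → M) (g : α ⊕ β → M), g ∘ Sum.inl = x →
      (∀ b : Fβ, g (Sum.inr b.1) = u b) →
      (ψ.Realize (Sum.elim x u) ↔ φ.Realize g) := by
    rintro x u g rfl hu
    refine Language.BoundedFormula.realize_restrictFreeVar g fun ⟨v, hv⟩ => ?_
    cases v with
    | inl a => rfl
    | inr b => exact (hu ⟨b, hv⟩).symm
  convert Set.Definable.exists_of_finite (S := {w | ψ.Realize w}) ⟨ψ, rfl⟩ using 1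
  ext x
  simp only [Set.mem_image, Set.mem_ofPred_eq]
  constructor
  · rintro ⟨g, hg, rfl⟩
    exact ⟨fun b => g (Sum.inr b.1), (hψ _ _ g rfl fun _ => rfl).mpr hg⟩
  · rintro ⟨u, hu⟩
    let g : α ⊕ β → M := Sum.elim x fun b => if hb : _ then u ⟨b, hb⟩ else g₀ (Sum.inr b)
    exact ⟨g, (hψ x u g rfl fun b => dif_pos b.2).mp hu, rfl⟩

theorem Set.Definable.setOf_cell {B : Set M} {γ : Type*} {𝒮 : Finset (Set (γ → M))}
    (h𝒮 : ∀ S ∈ 𝒮, B.Definable L S)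
    (P : Finset (Set (γ → M)) → Prop) : B.Definable L {g | P (cell 𝒮 g)} := by
  classical
  induction 𝒮 using Finset.induction_on generalizing P with
  | empty => by_cases h : P ∅ <;> simp [cell, h, Set.definable_univ, Set.definable_empty]
  | insert S 𝒮 hS ih =>
    have hS' := h𝒮 S (Finset.mem_insert_self S 𝒮)
    have h𝒮' := fun T hT => h𝒮 T (Finset.mem_insert_of_mem hT)
    have : {g | P (cell (insert S 𝒮) g)} =
        (S ∩ {g | P (insert S (cell 𝒮 g))}) ∪ (Sᶜ ∩ {g | P (cell 𝒮 g)}) := by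
      ext g
      by_cases hg : g ∈ S <;> simp [cell, Finset.filter_insert, hg]
    rw [this]
    exact (hS'.inter (ih h𝒮' (P ∘ insert S))).union (hS'.compl.inter (ih h𝒮' P))

theorem Set.Definable.setOf_indicatorSum {B : Set M} {γ : Type*} {p : Set (γ → M) →₀ ℝ}
    (hp : ∀ S ∈ p.support, B.Definable L S) (P : ℝ → Prop) :
    B.Definable L {g | P (indicatorSum p g)} := by
  simp_rw [indicatorSum_apply]
  exact Set.Definable.setOf_cell hp (fun t => P (∑ S ∈ t, p S))

namespace KeislerMeasure

variable {B : Set M} {γ : Type*} (κ : KeislerMeasure L M B γ)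

theorem apply_empty : κ.toFun ∅ = 0 := by
  simpa [κ.measure_univ] using κ.compl' Set.univ Set.definable_univ

theorem apply_union_of_disjoint {s t : Set (γ → M)} (hs : B.Definable L s)
    (ht : B.Definable L t) (hst : Disjoint s t) :
    κ.toFun (s ∪ t) = κ.toFun s + κ.toFun t := by
  rw [κ.union_inter' s t hs ht, hst.inter_eq, apply_empty, sub_zero]

theorem apply_inter_add_apply_inter_compl {s C : Set (γ → M)} (hs : B.Definable L s)
    (hC : B.Definable L C) : κ.toFun (s ∩ C) + κ.toFun (s ∩ Cᶜ) = κ.toFun s := by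
  rw [← κ.apply_union_of_disjoint (hs.inter hC) (hs.inter hC.compl)
    (disjoint_compl_right.mono inf_le_right inf_le_right), Set.inter_union_compl]

theorem mono {s t : Set (γ → M)} (hs : B.Definable L s) (ht : B.Definable L t)
    (hst : s ⊆ t) : κ.toFun s ≤ κ.toFun t := by
  rw [← κ.apply_inter_add_apply_inter_compl ht hs, Set.inter_eq_right.mpr hst]
  exact le_add_of_nonneg_right (κ.nonneg' _ (ht.inter hs.compl))

theorem apply_biUnion_finset {ι : Type*} (I : Finset ι) {P : ι → Set (γ → M)}
    (hP : ∀ i, B.Definable L (P i)) (hdisj : (I : Set ι).PairwiseDisjoint P) :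
    κ.toFun (⋃ i ∈ I, P i) = ∑ i ∈ I, κ.toFun (P i) := by
  classical
  induction I using Finset.induction_on with
  | empty => simp [apply_empty]
  | insert i I hi ih =>
    rw [Finset.coe_insert] at hdisj
    rw [Finset.set_biUnion_insert, Finset.sum_insert hi,
      κ.apply_union_of_disjoint (hP i) (Set.definable_biUnion_finset hP I)
        (Set.disjoint_iUnion₂_right.mpr fun j hj => hdisj (Set.mem_insert i _)
          (Set.mem_insert_of_mem i hj) (ne_of_mem_of_not_mem hj hi).symm),
      ih (hdisj.subset (Set.subset_insert i _))]

theorem apply_inter_eq_zero {s C : Set (γ → M)} (hs : B.Definable L s) (hC : B.Definable L C)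
    (h : κ.toFun C = 0) : κ.toFun (s ∩ C) = 0 :=
  le_antisymm (h ▸ κ.mono (hs.inter hC) hC Set.inter_subset_right) (κ.nonneg' _ (hs.inter hC))

theorem apply_inter_eq_self {s C : Set (γ → M)} (hs : B.Definable L s) (hC : B.Definable L C)
    (h : κ.toFun Cᶜ = 0) : κ.toFun (s ∩ C) = κ.toFun s := by
  rw [← κ.apply_inter_add_apply_inter_compl hs hC, κ.apply_inter_eq_zero hs hC.compl h, add_zero]

theorem antitone_apply_setOf_le {F : (γ → M) → ℝ} (hF : ∀ r, B.Definable L {g | r ≤ F g}) :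
    Antitone fun r => κ.toFun {g | r ≤ F g} :=
  fun _ _ hrs => κ.mono (hF _) (hF _) fun _ hg => hrs.trans hg

theorem apply_setOf_eq_sum {ι : Type*} {π : (γ → M) → ι} {P : Finset ι}
    (hP : ∀ g, π g ∈ P) (hπ : ∀ Q : ι → Prop, B.Definable L {g | Q (π g)}) (Q : ι → Prop)
    [DecidablePred Q] :
    κ.toFun {g | Q (π g)} = ∑ t ∈ P with Q t, κ.toFun (π ⁻¹' {t}) := by
  have : {g | Q (π g)} = ⋃ t ∈ P.filter Q, π ⁻¹' {t} := by
    ext g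
    simp [hP]
  rw [this, κ.apply_biUnion_finset (P := fun t => π ⁻¹' {t}) _ (fun t => hπ (· = t))
    ((Set.pairwiseDisjoint_fiber π _).subset (Set.subset_univ _))]

section LayerCake

variable {p : Set (γ → M) →₀ ℝ} (hp : ∀ S ∈ p.support, B.Definable L S)
include hp

theorem linearCombination_eq_sum_cell :
    Finsupp.linearCombination ℝ κ.toFun p =
      ∑ t ∈ p.support.powerset, (∑ S ∈ t, p S) * κ.toFun (cell p.support ⁻¹' {t}) := by
  classical
  have hcell : ∀ S ∈ p.support, S = {g | S ∈ cell p.support g} := fun S hS => by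
    ext g
    simp [cell, hS]
  calc Finsupp.linearCombination ℝ κ.toFun p
      = ∑ S ∈ p.support, p S * ∑ t ∈ p.support.powerset with S ∈ t,
          κ.toFun (cell p.support ⁻¹' {t}) := by
        rw [Finsupp.linearCombination_apply, Finsupp.sum]
        refine Finset.sum_congr rfl fun S hS => ?_
        rw [smul_eq_mul]
        congr 1
        conv_lhs => rw [hcell S hS]
        exact κ.apply_setOf_eq_sum (cell_mem_powerset _) (Set.Definable.setOf_cell hp) (S ∈ ·)
    _ = _ := by
        simp_rw [Finset.mul_sum, Finset.sum_mul]
        exact Finset.sum_comm' fun S t => by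
          simp only [Finset.mem_filter, Finset.mem_powerset]
          exact ⟨fun ⟨_, ht, hSt⟩ => ⟨hSt, ht⟩, fun ⟨hSt, ht⟩ => ⟨ht hSt, ht, hSt⟩⟩

theorem linearCombination_eq_layerCake {a b : ℝ} (hab : ∀ g, indicatorSum p g ∈ Set.Icc a b) :
    Finsupp.linearCombination ℝ κ.toFun p =
      a + ∫ r in a..b, κ.toFun {g | r ≤ indicatorSum p g} := by
  classical
  set c : Finset (Set (γ → M)) → ℝ := fun t => ∑ S ∈ t, p S
  set w : Finset (Set (γ → M)) → ℝ := fun t => κ.toFun (cell p.support ⁻¹' {t})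
  have hsum := κ.apply_setOf_eq_sum (cell_mem_powerset _) (Set.Definable.setOf_cell hp)
  have hw : ∑ t ∈ p.support.powerset, w t = 1 := by
    simpa [κ.measure_univ] using (hsum fun _ => True).symm
  have hterm : ∀ t ∈ p.support.powerset,
      c t * w t = a * w t + ∫ r in a..b, {r | r ≤ c t}.indicator (fun _ => w t) r := by
    refine fun t _ => mul_eq_add_integral_indicator fun hwt => ?_
    obtain ⟨g, rfl⟩ : (cell p.support ⁻¹' {t}).Nonempty :=
      Set.nonempty_iff_ne_empty.mpr fun h => hwt (by simp only [w, h, apply_empty])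
    have := hab g
    rwa [indicatorSum_apply] at this
  have hlevel : ∀ r, κ.toFun {g | r ≤ indicatorSum p g} =
      ∑ t ∈ p.support.powerset, {r | r ≤ c t}.indicator (fun _ => w t) r := fun r => by
    simp_rw [indicatorSum_apply]
    rw [hsum (fun t => r ≤ c t), Finset.sum_filter]
    rfl
  rw [linearCombination_eq_sum_cell κ hp, Finset.sum_congr rfl hterm, Finset.sum_add_distrib,
    ← Finset.mul_sum, hw, mul_one]
  simp_rw [hlevel]
  exact congrArg _ (intervalIntegral.integral_finsetSum fun t _ =>
    ⟨intervalIntegrable_const.1.indicator measurableSet_Iic,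
      intervalIntegrable_const.2.indicator measurableSet_Iic⟩).symm

end LayerCake

noncomputable def ofPositive (G : (Set (γ → M) →₀ ℝ) →ₗ[ℝ] ℝ)
    (hG : ∀ e, 0 ≤ indicatorSum e → 0 ≤ G e) (h1 : G (Finsupp.single Set.univ 1) = 1) :
    KeislerMeasure L M B γ where
  toFun S := G (Finsupp.single S 1)
  measure_univ := h1
  nonneg' S _ := hG _ <| by
    rw [indicatorSum_single_one]
    exact Set.indicator_nonneg fun _ _ => zero_le_one
  compl' S _ := by
    calc G (Finsupp.single Sᶜ 1)
        = G (Finsupp.single Set.univ 1 - Finsupp.single S 1) := by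
          refine G.eq_of_indicatorSum_eq hG ?_
          rw [map_sub, indicatorSum_single_one, indicatorSum_single_one, indicatorSum_single_one,
            Set.indicator_compl, Set.indicator_univ]
      _ = 1 - G (Finsupp.single S 1) := by rw [map_sub, h1]
  union_inter' S T _ _ := by
    rw [← map_add, ← map_sub]
    refine G.eq_of_indicatorSum_eq hG ?_
    simp only [map_add, map_sub, indicatorSum_single_one]
    exact eq_sub_of_add_eq (Set.indicator_union_add_inter 1 S T)

noncomputable def localize (C : Set (γ → M)) (hC : B.Definable L C) (h0 : 0 < κ.toFun C) :
    KeislerMeasure L M B γ where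
  toFun S := κ.toFun (S ∩ C) / κ.toFun C
  measure_univ := by rw [Set.univ_inter, div_self h0.ne']
  nonneg' S hS := div_nonneg (κ.nonneg' _ (hS.inter hC)) h0.le
  compl' S hS := by
    rw [eq_sub_iff_add_eq, ← add_div, div_eq_one_iff_eq h0.ne', Set.inter_comm, Set.inter_comm S,
      add_comm, κ.apply_inter_add_apply_inter_compl hC hS]
  union_inter' S T hS hT := by
    rw [Set.union_inter_distrib_right, κ.union_inter' _ _ (hS.inter hC) (hT.inter hC),
      ← Set.inter_inter_distrib_right, sub_div, add_div]

theorem localize_apply {C : Set (γ → M)} (hC : B.Definable L C) (h0 : 0 < κ.toFun C)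
    (S : Set (γ → M)) : (κ.localize C hC h0).toFun S = κ.toFun (S ∩ C) / κ.toFun C :=
  rfl

theorem localize_apply_of_disjoint {C S : Set (γ → M)} (hC : B.Definable L C)
    (h0 : 0 < κ.toFun C) (hS : Disjoint S C) : (κ.localize C hC h0).toFun S = 0 := by
  rw [localize_apply, hS.inter_eq, apply_empty, zero_div]

theorem apply_eq_localize_add_localize_compl {C : Set (γ → M)} (hC : B.Definable L C)
    (h0 : 0 < κ.toFun C) (h0' : 0 < κ.toFun Cᶜ) {S : Set (γ → M)} (hS : B.Definable L S) :
    κ.toFun S = κ.toFun C * (κ.localize C hC h0).toFun S +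
      (1 - κ.toFun C) * (κ.localize Cᶜ hC.compl h0').toFun S := by
  rw [localize_apply, localize_apply, ← κ.compl' C hC, mul_div_cancel₀ _ h0.ne',
    mul_div_cancel₀ _ h0'.ne', κ.apply_inter_add_apply_inter_compl hS hC]

noncomputable def convexComb (t : ℝ) (ht₀ : 0 ≤ t) (ht₁ : t ≤ 1)
    (κ₁ κ₂ : KeislerMeasure L M B γ) : KeislerMeasure L M B γ where
  toFun S := t * κ₁.toFun S + (1 - t) * κ₂.toFun S
  measure_univ := by rw [κ₁.measure_univ, κ₂.measure_univ]; ring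
  nonneg' S hS := add_nonneg (mul_nonneg ht₀ (κ₁.nonneg' S hS))
    (mul_nonneg (sub_nonneg.mpr ht₁) (κ₂.nonneg' S hS))
  compl' S hS := by rw [κ₁.compl' S hS, κ₂.compl' S hS]; ring
  union_inter' S T hS hT := by
    rw [κ₁.union_inter' S T hS hT, κ₂.union_inter' S T hS hT]; ring

end KeislerMeasure

section Amalgams

variable {A : Set M} {α β : Type*} {lam : KeislerMeasure L M A (α ⊕ β)}
  {mu : KeislerMeasure L M (Set.univ : Set M) α} {p : Set (α ⊕ β → M) →₀ ℝ}
  {q : Set (α → M) →₀ ℝ}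

theorem apply_setOf_le_neg_indicatorSum_le
    (hmarg : ∀ X : Set (α → M), A.Definable L X → lam.toFun (cyl Sum.inl X) = mu.toFun X)
    (hp : ∀ S ∈ p.support, A.Definable L S)
    (hq : ∀ X ∈ q.support, (Set.univ : Set M).Definable L X)
    (hpq : ∀ g, 0 ≤ indicatorSum p g + indicatorSum q (g ∘ Sum.inl)) (r : ℝ) :
    mu.toFun {x | r ≤ -indicatorSum q x} ≤ lam.toFun {g | r ≤ indicatorSum p g} := by
  set W : Set (α → M) := ((· ∘ Sum.inl) '' {g | indicatorSum p g < r})ᶜ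
  have hW : A.Definable L W :=
    (Set.Definable.setOf_indicatorSum hp (· < r)).image_comp_sumInl.compl
  calc mu.toFun {x | r ≤ -indicatorSum q x}
      ≤ mu.toFun W := by
        refine mu.mono (Set.Definable.setOf_indicatorSum hq (r ≤ -·))
          (hW.mono (Set.subset_univ A)) ?_
        rintro _ hx ⟨g, hg, rfl⟩
        linarith [hpq g, show r ≤ -indicatorSum q (g ∘ Sum.inl) from hx,
          show indicatorSum p g < r from hg]
    _ = lam.toFun (cyl Sum.inl W) := (hmarg W hW).symm
    _ ≤ lam.toFun {g | r ≤ indicatorSum p g} :=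
        lam.mono (hW.preimage_comp Sum.inl) (Set.Definable.setOf_indicatorSum hp _)
          fun g hg => show r ≤ _ from not_lt.mp fun hlt => hg ⟨g, hlt, rfl⟩

theorem linearCombination_add_nonneg
    (hmarg : ∀ X : Set (α → M), A.Definable L X → lam.toFun (cyl Sum.inl X) = mu.toFun X)
    (hp : ∀ S ∈ p.support, A.Definable L S)
    (hq : ∀ X ∈ q.support, (Set.univ : Set M).Definable L X)
    (hpq : ∀ g, 0 ≤ indicatorSum p g + indicatorSum q (g ∘ Sum.inl)) :
    0 ≤ Finsupp.linearCombination ℝ lam.toFun p + Finsupp.linearCombination ℝ mu.toFun q := by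
  have hbp : 0 ≤ p.sum fun _ a => |a| := Finset.sum_nonneg fun _ _ => abs_nonneg _
  have hbq : 0 ≤ q.sum fun _ a => |a| := Finset.sum_nonneg fun _ _ => abs_nonneg _
  set b := (p.sum fun _ a => |a|) + q.sum fun _ a => |a|
  have hpb : ∀ g, indicatorSum p g ∈ Set.Icc (-b) b := fun g =>
    abs_le.mp ((abs_indicatorSum_le p g).trans (le_add_of_nonneg_right hbq))
  have hqb : ∀ x, indicatorSum (-q) x ∈ Set.Icc (-b) b := fun x => by
    rw [map_neg, Pi.neg_apply]
    exact abs_le.mp ((abs_neg _).trans_le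
      ((abs_indicatorSum_le q x).trans (le_add_of_nonneg_left hbp)))
  have hlam := lam.linearCombination_eq_layerCake hp hpb
  have hmu := mu.linearCombination_eq_layerCake (p := -q) (by rwa [Finsupp.support_neg]) hqb
  simp only [map_neg, Pi.neg_apply] at hmu
  have hint : ∫ r in -b..b, mu.toFun {x | r ≤ -indicatorSum q x} ≤
      ∫ r in -b..b, lam.toFun {g | r ≤ indicatorSum p g} :=
    intervalIntegral.integral_mono_on (by linarith)
      (mu.antitone_apply_setOf_le fun r =>
        Set.Definable.setOf_indicatorSum hq (r ≤ -·)).intervalIntegrable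
      (lam.antitone_apply_setOf_le fun r =>
        Set.Definable.setOf_indicatorSum hp (r ≤ ·)).intervalIntegrable
      fun r _ => apply_setOf_le_neg_indicatorSum_le hmarg hp hq hpq r
  linarith

variable (lam mu) in
theorem extSpace_nonempty
    (hmarg : ∀ X : Set (α → M), A.Definable L X → lam.toFun (cyl Sum.inl X) = mu.toFun X) :
    (extSpace L A lam mu).Nonempty := by
  let E₁ := Set (α ⊕ β → M) →₀ ℝ
  let E₂ := Set (α → M) →₀ ℝ
  let C := (Finsupp.supported ℝ ℝ {S : Set (α ⊕ β → M) | A.Definable L S}).prod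
    (Finsupp.supported ℝ ℝ {X : Set (α → M) | (Set.univ : Set M).Definable L X})
  let Φ : E₁ × E₂ →ₗ[ℝ] (α ⊕ β → M) → ℝ :=
    indicatorSum ∘ₗ LinearMap.fst ℝ E₁ E₂ +
      LinearMap.funLeft ℝ ℝ (· ∘ Sum.inl) ∘ₗ indicatorSum ∘ₗ LinearMap.snd ℝ E₁ E₂
  let V : E₁ × E₂ →ₗ[ℝ] ℝ :=
    Finsupp.linearCombination ℝ lam.toFun ∘ₗ LinearMap.fst ℝ E₁ E₂ +
      Finsupp.linearCombination ℝ mu.toFun ∘ₗ LinearMap.snd ℝ E₁ E₂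
  have hC₁ : ∀ S, A.Definable L S → (Finsupp.single S 1, (0 : E₂)) ∈ C := fun S hS =>
    ⟨Finsupp.single_mem_supported ℝ 1 hS, Submodule.zero_mem _⟩
  have hΦ₁ : Φ (Finsupp.single Set.univ 1, 0) = 1 := by
    simp [Φ, indicatorSum_single_one]
  obtain ⟨G, hG⟩ := exists_linearMap_le_of_nonneg indicatorSum Φ V C
    (fun c ⟨hp, hq⟩ hpq => linearCombination_add_nonneg hmarg
      (fun S hS => (Finsupp.mem_supported ℝ _).mp hp hS)
      (fun X hX => (Finsupp.mem_supported ℝ _).mp hq hX) (fun g => hpq g))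
    (fun e => ⟨(e.sum fun _ a => |a|) • (Finsupp.single Set.univ 1, 0),
      C.smul_mem _ (hC₁ _ Set.definable_univ), fun g => by
        rw [map_smul, hΦ₁, Pi.smul_apply, Pi.one_apply, smul_eq_mul, mul_one]
        exact (le_abs_self _).trans (abs_indicatorSum_le e g)⟩)
  have hGeq : ∀ e, ∀ c ∈ C, indicatorSum e = Φ c → G e = V c := fun e c hc h => by
    have := hG (-e) (-c) (C.neg_mem hc) (by rw [map_neg, map_neg, h])
    rw [map_neg, map_neg] at this
    exact le_antisymm (hG e c hc h.le) (by linarith)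
  have hGpos : ∀ e, 0 ≤ indicatorSum e → 0 ≤ G e := fun e he => by
    have := hG (-e) 0 C.zero_mem (by rw [map_neg, map_zero]; exact neg_nonpos.mpr he)
    rw [map_neg, map_zero] at this
    linarith
  have hGuniv : G (Finsupp.single Set.univ 1) = 1 := by
    rw [hGeq _ _ (hC₁ _ Set.definable_univ)
      (by rw [hΦ₁, indicatorSum_single_one, Set.indicator_univ])]
    simp [V, lam.measure_univ]
  refine ⟨KeislerMeasure.ofPositive G hGpos hGuniv, fun s hs => ?_, fun X hX => ?_⟩
  · change G _ = _
    rw [hGeq _ _ (hC₁ s hs) (by simp [Φ])]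
    simp [V]
  · change G _ = _
    rw [hGeq (Finsupp.single (cyl Sum.inl X) 1) (0, Finsupp.single X 1)
      ⟨Submodule.zero_mem _, Finsupp.single_mem_supported ℝ 1 hX⟩
      (by
        simp only [Φ, indicatorSum_single_one, LinearMap.add_apply, LinearMap.coe_comp,
          LinearMap.coe_fst, LinearMap.coe_snd, Function.comp_apply, map_zero, zero_add]
        rfl)]
    simp [V]

theorem localize_cyl_inl_of_separated
    (hamal : ∀ (X : Set (α → M)) (Y : Set (β → M)), A.Definable L X → A.Definable L Y →
      lam.toFun (prodSet X Y) = lam.toFun (cyl Sum.inl X) * lam.toFun (cyl Sum.inr Y))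
    {D : Set (β → M)} (hD : A.Definable L D) (h0 : 0 < lam.toFun (cyl Sum.inr D))
    {X : Set (α → M)} (hX : A.Definable L X) :
    (lam.localize (cyl Sum.inr D) (hD.cyl _) h0).toFun (cyl Sum.inl X) =
      lam.toFun (cyl Sum.inl X) := by
  rw [KeislerMeasure.localize_apply]
  change lam.toFun (prodSet X D) / _ = _
  rw [hamal X D hX hD, mul_div_cancel_right₀ _ h0.ne']

theorem convexComb_mem_extSpace {C : Set (α ⊕ β → M)} (hC : A.Definable L C)
    (h0 : 0 < lam.toFun C) (h0' : 0 < lam.toFun Cᶜ)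
    {ω₁ ω₂ : KeislerMeasure L M (Set.univ : Set M) (α ⊕ β)}
    (h₁ : ω₁ ∈ extSpace L A (lam.localize C hC h0) mu)
    (h₂ : ω₂ ∈ extSpace L A (lam.localize Cᶜ hC.compl h0') mu) :
    KeislerMeasure.convexComb (lam.toFun C) h0.le (by linarith [lam.compl' C hC]) ω₁ ω₂ ∈
      extSpace L A lam mu := by
  refine ⟨fun s hs => ?_, fun X hX => ?_⟩
  · change _ * _ + _ * _ = _
    rw [h₁.1 s hs, h₂.1 s hs, ← lam.apply_eq_localize_add_localize_compl hC h0 h0' hs]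
  · change _ * _ + _ * _ = _
    rw [h₁.2 X hX, h₂.2 X hX]
    ring

end Amalgams

end

/-- Extension domination witnessed by a separated amalgam is closed under
localizations: if `D ∈ L_β(A)` with `0 < ν(D) < 1`, `μ ≥_{E,A} ν` is witnessed by a
separated amalgam `λ ∈ 𝔐_{αβ}(A)`, and `nuD` is the localization `ν_[D]`
(`nuD(Y) = ν(D ∩ Y)/ν(D)` for every definable `Y`), then `μ ≥_{E,A} ν_[D]`. -/
theorem extDom_localization {L : FirstOrder.Language} {M : Type*} [L.Structure M]
    (A : Set M) {α β : Type*}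
    (mu : KeislerMeasure L M (Set.univ : Set M) α)
    (nu : KeislerMeasure L M (Set.univ : Set M) β)
    (D : Set (β → M)) (hD : A.Definable L D)
    (hD0 : 0 < nu.toFun D) (hD1 : nu.toFun D < 1)
    (lam : KeislerMeasure L M A (α ⊕ β))
    (hamal : ∀ (X : Set (α → M)) (Y : Set (β → M)),
      A.Definable L X → A.Definable L Y →
      lam.toFun (prodSet X Y) = lam.toFun (cyl Sum.inl X) * lam.toFun (cyl Sum.inr Y))
    (hmarg : ∀ X : Set (α → M), A.Definable L X →
      lam.toFun (cyl Sum.inl X) = mu.toFun X)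
    (hwit : ∀ om ∈ extSpace L A lam mu, ∀ Y : Set (β → M),
      (Set.univ : Set M).Definable L Y → om.toFun (cyl Sum.inr Y) = nu.toFun Y)
    (nuD : KeislerMeasure L M (Set.univ : Set M) β)
    (hnuD : ∀ Y : Set (β → M), (Set.univ : Set M).Definable L Y →
      nuD.toFun Y = nu.toFun (D ∩ Y) / nu.toFun D) :
    ExtDomOver L A mu nuD := by
  have hD' := hD.mono (Set.subset_univ A)
  obtain ⟨ω₀, hω₀⟩ := extSpace_nonempty lam mu hmarg
  have hd : lam.toFun (cyl Sum.inr D) = nu.toFun D :=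
    (hω₀.1 _ (hD.cyl _)).symm.trans (hwit ω₀ hω₀ D hD')
  have h0 : 0 < lam.toFun (cyl Sum.inr D) := hd ▸ hD0
  have h0' : 0 < lam.toFun (cyl Sum.inr D)ᶜ := by
    rw [lam.compl' _ (hD.cyl _), hd]
    linarith
  obtain ⟨σ, hσ⟩ := extSpace_nonempty (lam.localize _ (hD.cyl _).compl h0') mu fun X hX =>
    (localize_cyl_inl_of_separated hamal hD.compl h0' hX).trans (hmarg X hX)
  refine ⟨lam.localize _ (hD.cyl _) h0,
    fun X hX => (localize_cyl_inl_of_separated hamal hD h0 hX).trans (hmarg X hX),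
    fun ω hω Y hY => ?_⟩
  have hωD : ω.toFun (cyl Sum.inr D)ᶜ = 0 := by
    rw [hω.1 _ (hD.cyl _).compl,
      KeislerMeasure.localize_apply_of_disjoint _ _ _ disjoint_compl_left]
  have hσD : σ.toFun (cyl Sum.inr D) = 0 := by
    rw [hσ.1 _ (hD.cyl _), KeislerMeasure.localize_apply_of_disjoint _ _ _ disjoint_compl_right]
  have hDY := hwit _ (convexComb_mem_extSpace (hD.cyl _) h0 h0' hω hσ) (D ∩ Y) (hD'.inter hY)
  change _ * ω.toFun (cyl Sum.inr D ∩ cyl Sum.inr Y) +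
    _ * σ.toFun (cyl Sum.inr D ∩ cyl Sum.inr Y) = _ at hDY
  rw [Set.inter_comm (cyl Sum.inr D), ω.apply_inter_eq_self (hY.cyl _) (hD'.cyl _) hωD,
    σ.apply_inter_eq_zero (hY.cyl _) (hD'.cyl _) hσD, mul_zero, add_zero, hd] at hDY
  rw [hnuD Y hY, ← hDY, mul_div_cancel_left₀ _ hD0.ne']
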